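/- arXiv:1209.4612 — 4 statements merged into one kernel-verified Lean document; each statement's English description precedes it below -/
import Mathlib

section
/- Define F(p,e,m) = p - 4√(pm) for p,e,m ≥ 0 with p+e+m = 1. Let F⁺ = F evaluated at (p²+2pe, e²+2pm, m²+2em) and F⁻ = F evaluated at (p²+m², 1-(1-e)², 2pm). Then (F⁺ + F⁻)/2 ≥ F(p,e,m). -/
/-- Potential function `F(p,e,m) = p - 4√(pm)` (the erasure probability `e` is unused). -/
noncomputable def Fpot (p e m : ℝ) : ℝ := p - 4 * Real.sqrt (p * m)

set_option maxHeartbeats 1000000 in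
/-- The average of `F` over the variable-node and check-node transforms dominates `F`. -/
theorem stmt_2 (p e m : ℝ) (hp : 0 ≤ p) (he : 0 ≤ e) (hm : 0 ≤ m)
    (hsum : p + e + m = 1) :
    (Fpot (p^2 + 2*p*e) (e^2 + 2*p*m) (m^2 + 2*e*m)
      + Fpot (p^2 + m^2) (1 - (1 - e)^2) (2*p*m)) / 2 ≥ Fpot p e m := by
  have he1 : e = 1 - p - m := by linarith
  subst he1
  have hpm1 : p + m ≤ 1 := by linarith
  simp only [Fpot, ge_iff_le]
  obtain ⟨S, hSdef⟩ : ∃ S, Real.sqrt (p*m) = S := ⟨_, rfl⟩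
  rw [hSdef]
  have hS0 : 0 ≤ S := hSdef ▸ Real.sqrt_nonneg _
  have hS2 : S^2 = p*m := by rw [← hSdef]; exact Real.sq_sqrt (by positivity)
  -- bound for X
  have hX : Real.sqrt ((p^2 + 2*p*(1-p-m))*(m^2 + 2*(1-p-m)*m)) ≤ S*(4-3*(p+m))/2 := by
    have h1 : (p^2 + 2*p*(1-p-m))*(m^2 + 2*(1-p-m)*m) ≤ (S*(4-3*(p+m))/2)^2 := by
      nlinarith [mul_nonneg (mul_nonneg hp hm) (sq_nonneg (p-m)), hS2]
    have h2 : 0 ≤ S*(4-3*(p+m))/2 := by nlinarith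
    calc Real.sqrt ((p^2 + 2*p*(1-p-m))*(m^2 + 2*(1-p-m)*m))
        ≤ Real.sqrt ((S*(4-3*(p+m))/2)^2) := Real.sqrt_le_sqrt h1
      _ = S*(4-3*(p+m))/2 := Real.sqrt_sq h2
  -- p + m ≥ 2S
  have hpm2 : 2*S ≤ p + m := by
    have h1 : Real.sqrt (4*(p*m)) ≤ Real.sqrt ((p+m)^2) := by
      apply Real.sqrt_le_sqrt; nlinarith [sq_nonneg (p-m)]
    rw [show (4:ℝ)*(p*m) = 2^2*(p*m) by ring, Real.sqrt_mul (by positivity),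
      Real.sqrt_sq (by norm_num : (0:ℝ) ≤ 2), Real.sqrt_sq (by linarith), hSdef] at h1
    exact h1
  -- key polynomial fact : A + B*S ≥ 0
  have hAB : 0 ≤ p^3*m + 19*p^2*m^2 + m^4/4 + 3*(p+m)*m*(m-2*p)*S := by
    rcases le_or_gt (2*p) m with h | h
    · have h1 : 0 ≤ 3*(p+m)*m*(m-2*p)*S := by
        apply mul_nonneg _ hS0
        apply mul_nonneg _ (by linarith)
        positivity
      nlinarith [pow_nonneg hp 3, sq_nonneg p, sq_nonneg m, mul_nonneg hp hm]
    · -- m < 2p : need A ≥ C*S with C = 3(p+m)m(2p-m)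
      have hu : 0 ≤ 2*p - m := by linarith
      have hC0 : 0 ≤ 3*(p+m)*m*(2*p-m) := by
        apply mul_nonneg _ hu
        apply mul_nonneg _ hm
        linarith
      have hA0 : 0 ≤ p^3*m + 19*p^2*m^2 + m^4/4 := by positivity
      have hpoly : 9*(p*m)*(p+m)^2*(2*p-m)^2 ≤ (p^3+19*p^2*m+m^3/4)^2 := by
        linarith [mul_nonneg (pow_nonneg hu 6) (pow_nonneg hm 0),
          mul_nonneg (pow_nonneg hu 5) (pow_nonneg hm 1),
          mul_nonneg (pow_nonneg hu 4) (pow_nonneg hm 2),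
          mul_nonneg (pow_nonneg hu 3) (pow_nonneg hm 3),
          mul_nonneg (pow_nonneg hu 2) (pow_nonneg hm 4),
          mul_nonneg (pow_nonneg hu 1) (pow_nonneg hm 5),
          pow_nonneg hm 6]
      have hsq' : (3*(p+m)*m*(2*p-m))^2 * (p*m) ≤ (p^3*m + 19*p^2*m^2 + m^4/4)^2 := by
        linarith [mul_le_mul_of_nonneg_left hpoly (sq_nonneg m)]
      have hsq : (3*(p+m)*m*(2*p-m)*S)^2 ≤ (p^3*m + 19*p^2*m^2 + m^4/4)^2 := by
        calc (3*(p+m)*m*(2*p-m)*S)^2 = (3*(p+m)*m*(2*p-m))^2 * S^2 := by ring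
          _ = (3*(p+m)*m*(2*p-m))^2 * (p*m) := by rw [hS2]
          _ ≤ _ := hsq'
      have hle : 3*(p+m)*m*(2*p-m)*S ≤ p^3*m + 19*p^2*m^2 + m^4/4 := by
        have h1 := Real.sqrt_le_sqrt hsq
        rwa [Real.sqrt_sq (mul_nonneg hC0 hS0), Real.sqrt_sq hA0] at h1
      linarith [hle]
  -- bound for Y
  have hY : 2 * Real.sqrt ((p^2+m^2)*(2*p*m)) ≤ 3*(p+m)*S + m^2/2 - p*m := by
    have hR0 : 0 ≤ 3*(p+m)*S + m^2/2 - p*m := by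
      have := mul_le_mul_of_nonneg_right hpm2 hS0
      nlinarith [hS2, sq_nonneg m]
    have hsqrt4 : Real.sqrt 4 = 2 := by
      rw [show (4:ℝ) = 2^2 by norm_num, Real.sqrt_sq (by norm_num : (0:ℝ) ≤ 2)]
    have h2Y : Real.sqrt (4*((p^2+m^2)*(2*p*m))) = 2 * Real.sqrt ((p^2+m^2)*(2*p*m)) := by
      rw [Real.sqrt_mul (by norm_num : (0:ℝ) ≤ 4), hsqrt4]
    rw [← h2Y]
    have hid : (3*(p+m)*S + m^2/2 - p*m)^2
        = 9*(p+m)^2*(p*m) + 3*(p+m)*m*(m-2*p)*S + (m^2/2-p*m)^2 := by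
      have : (3*(p+m)*S + m^2/2 - p*m)^2
          = 9*(p+m)^2*S^2 + 3*(p+m)*m*(m-2*p)*S + (m^2/2-p*m)^2 := by ring
      rw [this, hS2]
    have h1 : 4*((p^2+m^2)*(2*p*m)) ≤ (3*(p+m)*S + m^2/2 - p*m)^2 := by
      rw [hid]; linarith [hAB]
    calc Real.sqrt (4*((p^2+m^2)*(2*p*m))) ≤ Real.sqrt ((3*(p+m)*S + m^2/2 - p*m)^2) :=
          Real.sqrt_le_sqrt h1
      _ = 3*(p+m)*S + m^2/2 - p*m := Real.sqrt_sq hR0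
  -- finish
  linarith [hX, hY]
end

section
/- Define the Bhattacharyya parameter Z(p,e,m) = 2√(pm) + e for p,e,m ≥ 0 with p+e+m = 1. Let (p⁻,e⁻,m⁻) = (p²+m², 1-(1-e)², 2pm) be the check-node transform. Then Z(p⁻,e⁻,m⁻) ≤ 2·Z(p,e,m). -/
/-- Bhattacharyya parameter of the ternary density `(p,e,m)`. -/
noncomputable def Zb (p e m : ℝ) : ℝ := 2 * Real.sqrt (p * m) + e

/-- The check-node transform at most doubles the Bhattacharyya parameter. -/
theorem stmt_4 (p e m : ℝ) (hp : 0 ≤ p) (he : 0 ≤ e) (hm : 0 ≤ m)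
    (hsum : p + e + m = 1) :
    Zb (p^2 + m^2) (1 - (1 - e)^2) (2*p*m) ≤ 2 * Zb p e m := by
  unfold Zb
  have hp1 : p ≤ 1 := by linarith
  have hm1 : m ≤ 1 := by linarith
  have hpm : 0 ≤ p * m := mul_nonneg hp hm
  have hsq : p^2 + m^2 ≤ 1 := by nlinarith [mul_nonneg hp hm]
  have h1 : (p^2 + m^2) * (2*p*m) ≤ 4 * (p*m) := by nlinarith [mul_nonneg hpm (sub_nonneg.2 hsq)]
  have h2 : Real.sqrt ((p^2 + m^2) * (2*p*m)) ≤ Real.sqrt (4 * (p*m)) :=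
    Real.sqrt_le_sqrt h1
  have h3 : Real.sqrt (4 * (p*m)) = 2 * Real.sqrt (p*m) := by
    rw [show (4:ℝ) * (p*m) = 2^2 * (p*m) by ring, Real.sqrt_mul (by positivity),
      Real.sqrt_sq (by norm_num)]
  nlinarith [h2, h3, Real.sqrt_nonneg (p*m)]
end

section
/- Define the Bhattacharyya parameter Z(p,e,m) = 2√(pm) + e for p,e,m ≥ 0 with p+e+m = 1. Let (p⁺,e⁺,m⁺) = (p²+2pe, e²+2pm, m²+2em) be the variable-node transform. Then Z(p⁺,e⁺,m⁺) ≤ 2·Z(p,e,m)^{3/2}. -/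
/-- Key polynomial inequality. -/
lemma stmt_5_aux (u v : ℝ) (hu : 0 ≤ u) (hv : 0 ≤ v) (h1 : u^2+v^2 ≤ 1) :
    u^4*(u^4/4 + 2*v^2 + 2*v^4) ≤ ((u^2+v^2)*(u+v) - v^4 - u^4/2)^2 := by
  have hu1 : u ≤ 1 := by nlinarith
  have hv1 : v ≤ 1 := by nlinarith
  have huv : u*v ≤ 1 := by nlinarith
  have hs : u + v ≤ 1 + u*v := by nlinarith [sq_nonneg (u*v), sq_nonneg (u+v)]
  nlinarith [mul_nonneg (mul_nonneg (pow_nonneg hv 6) (sub_nonneg.2 hv1)) (sub_nonneg.2 hv1),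
    mul_nonneg (mul_nonneg hu (pow_nonneg hv 5)) (sub_nonneg.2 hv1),
    mul_nonneg (mul_nonneg (pow_nonneg hu 2) (pow_nonneg hv 4)) (sub_nonneg.2 hv1),
    mul_nonneg (pow_nonneg hu 2) (pow_nonneg hv 4),
    mul_nonneg (mul_nonneg (pow_nonneg hu 3) (pow_nonneg hv 3)) (sub_nonneg.2 hv1),
    mul_nonneg (mul_nonneg (pow_nonneg hu 3) (pow_nonneg hv 3)) (sub_nonneg.2 huv),
    mul_nonneg (pow_nonneg hu 4) (pow_nonneg hv 4),
    mul_nonneg (mul_nonneg (pow_nonneg hu 4) (pow_nonneg hv 2)) (sub_nonneg.2 hv1),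
    mul_nonneg (mul_nonneg (pow_nonneg hu 5) hv) (sub_nonneg.2 hv1),
    mul_nonneg (mul_nonneg (pow_nonneg hu 5) hv) (sub_nonneg.2 (by nlinarith : u^2 ≤ 1)),
    mul_nonneg (pow_nonneg hu 6) (sub_nonneg.2 (by linarith : u + v ≤ 1 + u*v))]

lemma stmt_5_aux2 (u v : ℝ) (hu : 0 ≤ u) (hv : 0 ≤ v) (h1 : u^2+v^2 ≤ 1) :
    v^4 + u^4/2 ≤ (u^2+v^2)*(u+v) := by
  have hu1 : u ≤ 1 := by nlinarith
  have hv1 : v ≤ 1 := by nlinarith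
  nlinarith [mul_nonneg hu hv, mul_nonneg (mul_nonneg hu hu) hv, mul_nonneg (mul_nonneg hv hv) hu,
    mul_le_of_le_one_right (pow_nonneg hu 3) hu1, mul_le_of_le_one_right (pow_nonneg hv 3) hv1]

/-- Under the variable-node transform, `Z⁺ ≤ 2 Z^{3/2}`. -/
theorem stmt_5 (p e m : ℝ) (hp : 0 ≤ p) (he : 0 ≤ e) (hm : 0 ≤ m)
    (hsum : p + e + m = 1) :
    Zb (p^2 + 2*p*e) (e^2 + 2*p*m) (m^2 + 2*e*m) ≤ 2 * (Zb p e m) ^ ((3:ℝ)/2) := by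
  set s := Real.sqrt (p*m) with hs_def
  have hpm : 0 ≤ p*m := mul_nonneg hp hm
  have hs0 : 0 ≤ s := Real.sqrt_nonneg _
  have hs2 : s^2 = p*m := Real.sq_sqrt hpm
  -- 2s ≤ p + m
  have h2s : 2*s ≤ p + m := by
    have h1 : Real.sqrt p ^ 2 = p := Real.sq_sqrt hp
    have h2 : Real.sqrt m ^ 2 = m := Real.sq_sqrt hm
    have h3 : s = Real.sqrt p * Real.sqrt m := Real.sqrt_mul hp m
    nlinarith [sq_nonneg (Real.sqrt p - Real.sqrt m)]
  set u := Real.sqrt (2*s) with hu_def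
  set v := Real.sqrt e with hv_def
  have hu0 : 0 ≤ u := Real.sqrt_nonneg _
  have hv0 : 0 ≤ v := Real.sqrt_nonneg _
  have hu2 : u^2 = 2*s := Real.sq_sqrt (by linarith)
  have hv2 : v^2 = e := Real.sq_sqrt he
  have hZ1 : u^2 + v^2 ≤ 1 := by rw [hu2, hv2]; linarith
  -- r = sqrt((p+2e)(m+2e))
  set r := Real.sqrt ((p+2*e)*(m+2*e)) with hr_def
  have hr0 : 0 ≤ r := Real.sqrt_nonneg _
  have hr2 : r^2 = (p+2*e)*(m+2*e) :=
    Real.sq_sqrt (mul_nonneg (by linarith) (by linarith))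
  -- the sqrt in the LHS factors
  have hfac : Real.sqrt ((p^2 + 2*p*e) * (m^2 + 2*e*m)) = s * r := by
    rw [show (p^2 + 2*p*e) * (m^2 + 2*e*m) = (p*m) * ((p+2*e)*(m+2*e)) by ring,
      Real.sqrt_mul hpm]
  -- key bound: 2*s*r + e^2 + 2*p*m ≤ (u^2+v^2)*(u+v)
  have hA : 0 ≤ (u^2+v^2)*(u+v) - v^4 - u^4/2 := by
    have := stmt_5_aux2 u v hu0 hv0 hZ1; linarith
  have hr2' : r^2 = u^4/4 + 2*v^2 + 2*v^4 := by
    linear_combination hr2 + (-(u^2+2*s)/4)*hu2 - hs2 + 2*e*hsum + (-2-2*(v^2+e))*hv2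
  have hkey : u^2 * r ≤ (u^2+v^2)*(u+v) - v^4 - u^4/2 := by
    have hsq : (u^2 * r)^2 ≤ ((u^2+v^2)*(u+v) - v^4 - u^4/2)^2 := by
      have : (u^2 * r)^2 = u^4 * (u^4/4 + 2*v^2 + 2*v^4) := by
        rw [mul_pow, ← hr2']; ring
      rw [this]
      exact stmt_5_aux u v hu0 hv0 hZ1
    exact le_of_pow_le_pow_left₀ two_ne_zero hA hsq
  -- Z and its sqrt
  have hZb : Zb p e m = u^2 + v^2 := by
    rw [Zb, ← hs_def]; linear_combination -hu2 - hv2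
  have hZnn : 0 ≤ u^2 + v^2 := by positivity
  have hsqZu : u ≤ Real.sqrt (u^2 + v^2) := by
    have h := Real.sqrt_le_sqrt (show u^2 ≤ u^2+v^2 by linarith [sq_nonneg v])
    rwa [Real.sqrt_sq hu0] at h
  have hsqZv : v ≤ Real.sqrt (u^2 + v^2) := by
    have h := Real.sqrt_le_sqrt (show v^2 ≤ u^2+v^2 by linarith [sq_nonneg u])
    rwa [Real.sqrt_sq hv0] at h
  -- rewrite rpow
  have hrpow : (Zb p e m) ^ ((3:ℝ)/2) = (u^2+v^2) * Real.sqrt (u^2+v^2) := by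
    rw [hZb]
    rw [show ((3:ℝ)/2) = (1/2) * ((3:ℕ):ℝ) by norm_num, Real.rpow_mul hZnn,
      Real.rpow_natCast, ← Real.sqrt_eq_rpow]
    rw [pow_succ, Real.sq_sqrt hZnn]
  -- assemble
  have hLHS : Zb (p^2 + 2*p*e) (e^2 + 2*p*m) (m^2 + 2*e*m)
      = u^2 * r + v^4 + u^4/2 := by
    rw [Zb, hfac]
    linear_combination (-r - (u^2+2*s)/2) * hu2 - (v^2+e) * hv2 - 2 * hs2
  rw [hLHS, hrpow]
  have hstep : u^2 * r + v^4 + u^4/2 ≤ (u^2+v^2)*(u+v) := by linarith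
  have hstep2 : (u^2+v^2)*(u+v) ≤ 2 * ((u^2+v^2) * Real.sqrt (u^2+v^2)) := by
    have h := mul_le_mul_of_nonneg_left (show u + v ≤ 2 * Real.sqrt (u^2+v^2) by linarith) hZnn
    linarith
  linarith
end

section
/- Let Z_n be a [0,1]-valued random process such that Z_{n+1} ≤ 2·Z_n with probability 1/2 and Z_{n+1} ≤ 2·Z_n^{3/2} with probability 1/2 (independently at each step), and suppose Z_n → 0 almost surely on an event of probability at least R. Then for any β < (log₂(3/2))/2, we have P(Z_n ≤ 2^{-2^{nβ}} eventually) ≥ R. -/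
open MeasureTheory ProbabilityTheory Filter
open Finset Topology

/-!
With `u n = -log₂ (z n)`, the step bounds read `u (n+1) ≥ p * u n - 1` with `p ∈ {1, 3/2}`.
Since `u n → ∞`, eventually `u n ≥ 1/ε`, and the additive loss is absorbed into the factor:
`u (n+1) ≥ (p - ε) * u n`. So `log₂ (u n)` grows at least like the partial sums of
`log₂ (p - ε)` along the coin flips, whose slope is almost surely
`(log₂ (1 - ε) + log₂ (3/2 - ε)) / 2` by the strong law of large numbers; this exceeds `β`
for `ε` small, giving `u n ≥ 2 ^ (n * β)` eventually.
-/

lemma eventually_nat_mul_le_of_add_le_succ {w g : ℕ → ℝ} {L ρ : ℝ}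
    (hg : Tendsto (fun n : ℕ => (∑ k ∈ range n, g k) / n) atTop (𝓝 L))
    (hw : ∀ᶠ n in atTop, w n + g n ≤ w (n + 1)) (hρ : ρ < L) :
    ∀ᶠ n : ℕ in atTop, n * ρ ≤ w n := by
  obtain ⟨m, hm⟩ := eventually_atTop.mp hw
  set C := w m - ∑ k ∈ range m, g k
  have hsum : ∀ n ≥ m, C + ∑ k ∈ range n, g k ≤ w n := by
    intro n hn
    induction n, hn using Nat.le_induction with
    | base => simp [C]
    | succ n hn ih => rw [sum_range_succ]; linarith [hm n hn]
  have hC : Tendsto (fun n : ℕ => (C + ∑ k ∈ range n, g k) / n) atTop (𝓝 L) := by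
    simpa [add_div] using (tendsto_const_div_atTop_nhds_zero_nat C).add hg
  filter_upwards [hC.eventually_const_lt hρ, eventually_ge_atTop m, eventually_gt_atTop 0]
    with n hlt hn hpos
  rw [lt_div_iff₀ (by exact_mod_cast hpos)] at hlt
  linarith [hsum n hn]

lemma tendsto_avg_comp_of_tendsto_avg_ite {b : ℕ → Bool}
    (hb : Tendsto (fun n : ℕ => (∑ k ∈ range n, if b k then (1 : ℝ) else 0) / n) atTop
      (𝓝 (1 / 2))) (h : Bool → ℝ) :
    Tendsto (fun n : ℕ => (∑ k ∈ range n, h (b k)) / n) atTop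
      (𝓝 ((h true + h false) / 2)) := by
  have hsplit : ∀ k, h (b k) = h false + (h true - h false) * (if b k then 1 else 0) := by
    intro k; cases b k <;> simp
  have hone : Tendsto (fun n : ℕ => (n : ℝ) / n) atTop (𝓝 1) :=
    tendsto_const_nhds.congr' <| (eventually_gt_atTop 0).mono fun n hn =>
      (div_self (Nat.cast_ne_zero.2 hn.ne')).symm
  have := (hone.const_mul (h false)).add (hb.const_mul (h true - h false))
  convert this using 2 with n
  · simp only [hsplit, sum_add_distrib, sum_const, card_range, nsmul_eq_mul, ← mul_sum]
    ring
  · ring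

lemma le_neg_logb_of_le_two_mul_rpow {z z' p : ℝ} (hz : 0 < z) (hz' : 0 < z')
    (h : z' ≤ 2 * z ^ p) : p * -Real.logb 2 z - 1 ≤ -Real.logb 2 z' := by
  have := Real.logb_le_logb_of_le one_lt_two hz' h
  rw [Real.logb_mul two_ne_zero (by positivity), Real.logb_self_eq_one one_lt_two,
    Real.logb_rpow_eq_mul_logb_of_pos hz] at this
  linarith

lemma logb_add_logb_sub_le {u u' p ε : ℝ} (hu : 0 < u) (hεp : ε < p) (hεu : 1 ≤ ε * u)
    (h : p * u - 1 ≤ u') : Real.logb 2 u + Real.logb 2 (p - ε) ≤ Real.logb 2 u' := by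
  rw [← Real.logb_mul hu.ne' (sub_pos.2 hεp).ne']
  exact Real.logb_le_logb_of_le one_lt_two (mul_pos hu (sub_pos.2 hεp)) (by nlinarith)

lemma exists_pos_lt_avg_logb_sub {p : Bool → ℝ} (hp : ∀ c, 0 < p c) {β : ℝ}
    (hβ : β < (Real.logb 2 (p true) + Real.logb 2 (p false)) / 2) :
    ∃ ε > 0, (∀ c, ε < p c) ∧
      β < (Real.logb 2 (p true - ε) + Real.logb 2 (p false - ε)) / 2 := by
  have hcont : ContinuousAt
      (fun e => (Real.logb 2 (p true - e) + Real.logb 2 (p false - e)) / 2) 0 := by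
    refine ((ContinuousAt.logb ?_ ?_).add (ContinuousAt.logb ?_ ?_)).div_const _ <;>
      first | fun_prop | simpa using (hp _).ne'
  have hnear : ∀ᶠ e in 𝓝 (0 : ℝ), (∀ c, e < p c) ∧
      β < (Real.logb 2 (p true - e) + Real.logb 2 (p false - e)) / 2 := by
    refine .and ?_ (hcont.eventually_const_lt (by simpa using hβ))
    simpa [Bool.forall_bool] using
      (eventually_lt_nhds (hp false)).and (eventually_lt_nhds (hp true))
  obtain ⟨ε, ⟨hεp, hεβ⟩, hε⟩ :=
    ((hnear.filter_mono nhdsWithin_le_nhds).and self_mem_nhdsWithin :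
      ∀ᶠ e in 𝓝[>] (0 : ℝ), _ ∧ 0 < e).exists
  exact ⟨ε, hε, hεp, hεβ⟩

lemma eq_zero_of_ge_of_eq_zero {z q : ℕ → ℝ} (hq : ∀ n, q n ≠ 0) (hz : ∀ n, 0 ≤ z n)
    (hstep : ∀ n, z (n + 1) ≤ 2 * z n ^ q n) {m : ℕ} (hm : z m = 0) : ∀ n ≥ m, z n = 0 := by
  intro n hn
  induction n, hn using Nat.le_induction with
  | base => exact hm
  | succ n _ ih =>
    refine le_antisymm ?_ (hz _)
    simpa [ih, Real.zero_rpow (hq n)] using hstep n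

lemma eventually_le_two_rpow_neg_two_rpow_of_pos {b : ℕ → Bool} {z : ℕ → ℝ} {p : Bool → ℝ}
    (hp : ∀ c, 0 < p c) (hz : ∀ n, 0 < z n) (hstep : ∀ n, z (n + 1) ≤ 2 * z n ^ p (b n))
    (hlim : Tendsto z atTop (𝓝 0))
    (hb : ∀ h : Bool → ℝ, Tendsto (fun n : ℕ => (∑ k ∈ range n, h (b k)) / n) atTop
      (𝓝 ((h true + h false) / 2)))
    {β : ℝ} (hβ : β < (Real.logb 2 (p true) + Real.logb 2 (p false)) / 2) :
    ∀ᶠ n : ℕ in atTop, z n ≤ (2 : ℝ) ^ (-(2 : ℝ) ^ ((n : ℝ) * β)) := by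
  obtain ⟨ε, hε, hεp, hεβ⟩ := exists_pos_lt_avg_logb_sub hp hβ
  let u : ℕ → ℝ := fun n => -Real.logb 2 (z n)
  have hu : Tendsto u atTop atTop :=
    tendsto_neg_atBot_atTop.comp <| (Real.tendsto_logb_nhdsGT_zero one_lt_two).comp <|
      tendsto_nhdsWithin_iff.2 ⟨hlim, .of_forall hz⟩
  have hlarge : ∀ᶠ n in atTop, 1 ≤ ε * u n := by
    filter_upwards [hu.eventually_ge_atTop (1 / ε)] with n hn
    rwa [div_le_iff₀' hε] at hn
  have hupos : ∀ᶠ n in atTop, 0 < u n :=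
    hlarge.mono fun n hn => pos_of_mul_pos_right (one_pos.trans_le hn) hε.le
  have hgrowth : ∀ᶠ n : ℕ in atTop, n * β ≤ Real.logb 2 (u n) := by
    refine eventually_nat_mul_le_of_add_le_succ (hb fun c => Real.logb 2 (p c - ε)) ?_ hεβ
    filter_upwards [hlarge, hupos] with n hn hun
    exact logb_add_logb_sub_le hun (hεp _) hn
      (le_neg_logb_of_le_two_mul_rpow (hz n) (hz _) (hstep n))
  filter_upwards [hgrowth, hupos] with n hn hun
  rw [← Real.logb_le_iff_le_rpow one_lt_two (hz n)]
  linarith [(Real.le_logb_iff_rpow_le one_lt_two hun).1 hn]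

theorem eventually_le_two_rpow_neg_two_rpow {b : ℕ → Bool} {z : ℕ → ℝ} {p : Bool → ℝ}
    (hp : ∀ c, 0 < p c) (hz : ∀ n, 0 ≤ z n) (hstep : ∀ n, z (n + 1) ≤ 2 * z n ^ p (b n))
    (hlim : Tendsto z atTop (𝓝 0))
    (hb : ∀ h : Bool → ℝ, Tendsto (fun n : ℕ => (∑ k ∈ range n, h (b k)) / n) atTop
      (𝓝 ((h true + h false) / 2)))
    {β : ℝ} (hβ : β < (Real.logb 2 (p true) + Real.logb 2 (p false)) / 2) :
    ∀ᶠ n : ℕ in atTop, z n ≤ (2 : ℝ) ^ (-(2 : ℝ) ^ ((n : ℝ) * β)) := by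
  by_cases hzero : ∃ m, z m = 0
  · obtain ⟨m, hm⟩ := hzero
    filter_upwards [eventually_ge_atTop m] with n hn
    rw [eq_zero_of_ge_of_eq_zero (fun n => (hp (b n)).ne') hz hstep hm n hn]
    positivity
  · simp only [not_exists] at hzero
    exact eventually_le_two_rpow_neg_two_rpow_of_pos hp (fun n => (hz n).lt_of_ne' (hzero n))
      hstep hlim hb hβ

section FairCoins

variable {Ω : Type*} [MeasurableSpace Ω] {μ : Measure Ω} [IsProbabilityMeasure μ]

lemma measure_preimage_singleton_eq_half {B : Ω → Bool} (hB : Measurable B)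
    (hfair : μ {ω | B ω = true} = 1 / 2) (t : Bool) : μ (B ⁻¹' {t}) = 1 / 2 := by
  have htrue : MeasurableSet {ω | B ω = true} := hB (measurableSet_singleton true)
  cases t
  · rw [show B ⁻¹' {false} = {ω | B ω = true}ᶜ by ext; simp,
      measure_compl htrue (measure_ne_top μ _), hfair,
      measure_univ, one_div, ENNReal.one_sub_inv_two]
  · exact hfair

lemma ae_tendsto_avg_comp_of_iIndepFun_fair {B : ℕ → Ω → Bool} (hB : ∀ n, Measurable (B n))
    (hindep : iIndepFun B μ) (hfair : ∀ n, μ {ω | B n ω = true} = 1 / 2) :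
    ∀ᵐ ω ∂μ, ∀ h : Bool → ℝ, Tendsto (fun n : ℕ => (∑ k ∈ range n, h (B k ω)) / n) atTop
      (𝓝 ((h true + h false) / 2)) := by
  let φ : Bool → ℝ := fun c => if c then 1 else 0
  have hφ : Measurable φ := measurable_of_countable _
  have hident : ∀ n, IdentDistrib (B n) (B 0) μ μ := fun n =>
    ⟨(hB n).aemeasurable, (hB 0).aemeasurable, Measure.ext_of_singleton fun t => by
      rw [Measure.map_apply (hB n) (measurableSet_singleton t),
        Measure.map_apply (hB 0) (measurableSet_singleton t),
        measure_preimage_singleton_eq_half (hB n) (hfair n),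
        measure_preimage_singleton_eq_half (hB 0) (hfair 0)]⟩
  have hmean : μ[fun ω => φ (B 0 ω)] = 1 / 2 := by
    rw [← integral_map (hB 0).aemeasurable hφ.aestronglyMeasurable,
      integral_fintype .of_finite]
    simp [φ, measureReal_def, Measure.map_apply (hB 0) (measurableSet_singleton true),
      measure_preimage_singleton_eq_half (hB 0) (hfair 0)]
  have hslln := strong_law_ae_real (fun n ω => φ (B n ω))
    (.of_bound (hφ.comp (hB 0)).aestronglyMeasurable 1 (.of_forall fun ω => by
      by_cases h : B 0 ω <;> simp [φ, h]))
    (fun i j hij => (hindep.indepFun hij).comp hφ hφ) (fun n => (hident n).comp hφ)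
  filter_upwards [hslln] with ω hω
  exact tendsto_avg_comp_of_tendsto_avg_ite (hmean ▸ hω)

end FairCoins

theorem stmt_13_general {Ω : Type*} [MeasurableSpace Ω] (μ : Measure Ω) [IsProbabilityMeasure μ]
    (B : ℕ → Ω → Bool) (Z : ℕ → Ω → ℝ) (R : ℝ) (A : Set Ω)
    (hBmeas : ∀ n, Measurable (B n))
    (hBindep : iIndepFun B μ)
    (hBfair : ∀ n, μ {ω | B n ω = true} = 1/2)
    (hZ01 : ∀ n ω, Z n ω ∈ Set.Icc (0:ℝ) 1)
    (hstep : ∀ n ω, Z (n+1) ω ≤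
      if B n ω then 2 * Z n ω else 2 * (Z n ω) ^ ((3:ℝ)/2))
    (hA : ENNReal.ofReal R ≤ μ A)
    (hconv : ∀ ω ∈ A, Tendsto (fun n => Z n ω) atTop (nhds 0)) :
    ∀ β : ℝ, β < Real.logb 2 (3/2) / 2 →
      ENNReal.ofReal R ≤
        μ {ω | ∀ᶠ n : ℕ in atTop, Z n ω ≤ (2:ℝ) ^ (-(2:ℝ) ^ ((n:ℝ) * β))} := by
  intro β hβ
  refine hA.trans (measure_mono_ae ?_)
  filter_upwards [ae_tendsto_avg_comp_of_iIndepFun_fair hBmeas hBindep hBfair] with ω hω hωA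
  refine eventually_le_two_rpow_neg_two_rpow (p := fun c => if c then 1 else 3 / 2)
    (fun c => by cases c <;> norm_num) (fun n => (hZ01 n ω).1) (fun n => ?_) (hconv ω hωA) hω
    (by simpa using hβ)
  by_cases h : B n ω <;> simpa [h] using hstep n ω

/-- Error-exponent bound for the quantized polar process: if a `[0,1]`-valued process
`Z_n` satisfies `Z_{n+1} ≤ 2 Z_n` or `Z_{n+1} ≤ 2 Z_n^{3/2}` according to i.i.d. fair
coin flips, and `Z_n → 0` on an event of probability at least `R`, then for every
`β < log₂(3/2)/2` we have `P(Z_n ≤ 2^{-2^{nβ}} eventually) ≥ R`. -/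
theorem stmt_13 {Ω : Type*} [MeasurableSpace Ω] (μ : Measure Ω) [IsProbabilityMeasure μ]
    (B : ℕ → Ω → Bool) (Z : ℕ → Ω → ℝ) (R : ℝ) (A : Set Ω)
    (hBmeas : ∀ n, Measurable (B n))
    (hBindep : iIndepFun B μ)
    (hBfair : ∀ n, μ {ω | B n ω = true} = 1/2)
    (hZmeas : ∀ n, Measurable (Z n))
    (hZ01 : ∀ n ω, Z n ω ∈ Set.Icc (0:ℝ) 1)
    (hstep : ∀ n ω, Z (n+1) ω ≤
      if B n ω then 2 * Z n ω else 2 * (Z n ω) ^ ((3:ℝ)/2))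
    (hA : ENNReal.ofReal R ≤ μ A)
    (hconv : ∀ ω ∈ A, Tendsto (fun n => Z n ω) atTop (nhds 0)) :
    ∀ β : ℝ, β < Real.logb 2 (3/2) / 2 →
      ENNReal.ofReal R ≤
        μ {ω | ∀ᶠ n : ℕ in atTop, Z n ω ≤ (2:ℝ) ^ (-(2:ℝ) ^ ((n:ℝ) * β))} :=
  stmt_13_general μ B Z R A hBmeas hBindep hBfair hZ01 hstep hA hconv
end
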